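/- arXiv:2508.03071 — 3 statements merged into one kernel-verified Lean document; each statement's English description precedes it below -/
import Mathlib

section
/- For all even integers k₁ > k₂ ≥ 2 and all real D ≥ 41, the quantity C(D,k₁,k₂) = (ζ(4(k₁+k₂))/(ζ(k₁+k₂)²ζ(k₁)²)) · (D/(4π²))^{k₂} · (Γ(k₁+k₂)/Γ(k₁))² · ((ζ(4k₁)/(ζ(k₁)²ζ(k₂)²)) · (D/(4π²))^{k₁−k₂} · (Γ(k₁)/Γ(k₂))² − 1) is strictly greater than 1. -/
/-!
Since `1 < ζ(k) ≤ ζ(2) = π²/6`, each quotient `ζ(·)/(ζ(·)²ζ(·)²)` exceeds `(6/π²)⁴ > 1/8`;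
since `4π² < 41`, the powers of `D/(4π²)` are at least `1`; and `Γ(a)/Γ(b) ≥ b^(a-b)`.
Parity gives `k₁ - k₂ ≥ 2`, so the inner factor is at least `2⁴/8 - 1 = 1`, while the outer
one is at least `4⁴/8 = 32`.
-/

open Real

lemma riemannZeta_natCast_re_eq_tsum {k : ℕ} (hk : 2 ≤ k) :
    (riemannZeta (k : ℂ)).re = ∑' n : ℕ, 1 / (n : ℝ) ^ k := by
  rw [zeta_nat_eq_tsum_of_gt_one hk, ← Complex.ofReal_re (∑' n : ℕ, 1 / (n : ℝ) ^ k),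
    Complex.ofReal_tsum]
  push_cast
  rfl

lemma one_lt_riemannZeta_natCast_re {k : ℕ} (hk : 2 ≤ k) : 1 < (riemannZeta (k : ℂ)).re := by
  have hsum : Summable fun n : ℕ ↦ 1 / (n : ℝ) ^ k :=
    summable_one_div_nat_pow.mpr (by omega)
  have hpair := hsum.sum_le_tsum {1, 2} fun n _ ↦ by positivity
  rw [Finset.sum_pair (by norm_num)] at hpair
  rw [riemannZeta_natCast_re_eq_tsum hk]
  have : (0 : ℝ) < 1 / (2 : ℝ) ^ k := by positivity
  rw [Nat.cast_one, one_pow, div_one, Nat.cast_two] at hpair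
  linarith

lemma riemannZeta_natCast_re_le_pi_sq_div_six {k : ℕ} (hk : 2 ≤ k) :
    (riemannZeta (k : ℂ)).re ≤ π ^ 2 / 6 := by
  rw [riemannZeta_natCast_re_eq_tsum hk, ← hasSum_zeta_two.tsum_eq]
  refine (summable_one_div_nat_pow.mpr (by omega)).tsum_le_tsum (fun n ↦ ?_)
    hasSum_zeta_two.summable
  rcases n.eq_zero_or_pos with rfl | hn
  · simp [zero_pow (by omega : k ≠ 0)]
  · gcongr
    exact_mod_cast hn

lemma pi_sq_div_six_pow_four_lt_eight : (π ^ 2 / 6) ^ 4 < 8 :=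
  calc (π ^ 2 / 6) ^ 4 < (3.15 ^ 2 / 6) ^ 4 := by gcongr; exact pi_lt_d2
    _ < 8 := by norm_num

lemma inv_eight_lt_riemannZeta_div_sq_mul_sq {k l m : ℕ} (hk : 2 ≤ k) (hl : 2 ≤ l) (hm : 2 ≤ m) :
    1 / 8 < (riemannZeta (k : ℂ)).re /
      ((riemannZeta (l : ℂ)).re ^ 2 * (riemannZeta (m : ℂ)).re ^ 2) := by
  have hl₁ := one_lt_riemannZeta_natCast_re hl
  have hm₁ := one_lt_riemannZeta_natCast_re hm
  have hden : (riemannZeta (l : ℂ)).re ^ 2 * (riemannZeta (m : ℂ)).re ^ 2 < 8 :=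
    calc (riemannZeta (l : ℂ)).re ^ 2 * (riemannZeta (m : ℂ)).re ^ 2
        ≤ (π ^ 2 / 6) ^ 2 * (π ^ 2 / 6) ^ 2 := by
          gcongr
          exacts [riemannZeta_natCast_re_le_pi_sq_div_six hl,
            riemannZeta_natCast_re_le_pi_sq_div_six hm]
      _ = (π ^ 2 / 6) ^ 4 := by ring
      _ < 8 := pi_sq_div_six_pow_four_lt_eight
  rw [lt_div_iff₀ (by positivity)]
  linarith [one_lt_riemannZeta_natCast_re hk]

lemma pow_sub_le_Gamma_div_Gamma {a b : ℕ} (hb : 1 ≤ b) (hab : b ≤ a) :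
    (b : ℝ) ^ (a - b) ≤ Gamma a / Gamma b := by
  obtain ⟨m, rfl⟩ : ∃ m, b = m + 1 := ⟨b - 1, by omega⟩
  obtain ⟨n, rfl⟩ := Nat.exists_eq_add_of_le hab
  rw [Nat.add_sub_cancel_left, show m + 1 + n = m + n + 1 by ring, Nat.cast_succ (m + n),
    Nat.cast_succ m, Gamma_nat_eq_factorial, Gamma_nat_eq_factorial, le_div_iff₀ (by positivity)]
  exact_mod_cast (mul_comm _ _).le.trans Nat.factorial_mul_pow_le_factorial

lemma sq_le_Gamma_div_Gamma {a b : ℕ} (hb : 1 ≤ b) (hab : b + 2 ≤ a) :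
    (b : ℝ) ^ 2 ≤ Gamma a / Gamma b :=
  (pow_le_pow_right₀ (by exact_mod_cast hb) (by omega)).trans
    (pow_sub_le_Gamma_div_Gamma hb (by omega))

theorem stmt_4 (k₁ k₂ : ℕ) (he₁ : Even k₁) (he₂ : Even k₂)
    (h2 : 2 ≤ k₂) (hlt : k₂ < k₁) (D : ℝ) (hD : 41 ≤ D) :
    1 < (riemannZeta ((4 * (k₁ + k₂) : ℕ) : ℂ)).re /
        ((riemannZeta ((k₁ + k₂ : ℕ) : ℂ)).re ^ 2 * (riemannZeta (k₁ : ℂ)).re ^ 2) *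
        (D / (4 * π ^ 2)) ^ k₂ *
        (Real.Gamma (k₁ + k₂ : ℕ) / Real.Gamma (k₁ : ℕ)) ^ 2 *
        ((riemannZeta ((4 * k₁ : ℕ) : ℂ)).re /
            ((riemannZeta (k₁ : ℂ)).re ^ 2 * (riemannZeta (k₂ : ℂ)).re ^ 2) *
          (D / (4 * π ^ 2)) ^ (k₁ - k₂) *
          (Real.Gamma (k₁ : ℕ) / Real.Gamma (k₂ : ℕ)) ^ 2 - 1) := by
  have hgap : k₂ + 2 ≤ k₁ := by
    obtain ⟨p, rfl⟩ := he₁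
    obtain ⟨q, rfl⟩ := he₂
    omega
  have hX : 1 ≤ D / (4 * π ^ 2) := by
    rw [one_le_div₀ (by positivity)]
    nlinarith [pi_lt_d2, pi_pos]
  have hA := inv_eight_lt_riemannZeta_div_sq_mul_sq (k := 4 * (k₁ + k₂)) (l := k₁ + k₂) (m := k₁)
    (by omega) (by omega) (by omega)
  have hB := inv_eight_lt_riemannZeta_div_sq_mul_sq (k := 4 * k₁) (l := k₁) (m := k₂)
    (by omega) (by omega) h2
  have hG₁ : (4 : ℝ) ^ 2 ≤ Gamma (k₁ + k₂ : ℕ) / Gamma (k₁ : ℕ) :=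
    (pow_le_pow_left₀ (by norm_num) (by exact_mod_cast (by omega : 4 ≤ k₁)) 2).trans
      (sq_le_Gamma_div_Gamma (by omega) (by omega))
  have hG₂ : (2 : ℝ) ^ 2 ≤ Gamma (k₁ : ℕ) / Gamma (k₂ : ℕ) :=
    (pow_le_pow_left₀ (by norm_num) (by exact_mod_cast h2) 2).trans
      (sq_le_Gamma_div_Gamma (by omega) hgap)
  set X := D / (4 * π ^ 2)
  set A := (riemannZeta ((4 * (k₁ + k₂) : ℕ) : ℂ)).re /
    ((riemannZeta ((k₁ + k₂ : ℕ) : ℂ)).re ^ 2 * (riemannZeta (k₁ : ℂ)).re ^ 2)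
  set B := (riemannZeta ((4 * k₁ : ℕ) : ℂ)).re /
    ((riemannZeta (k₁ : ℂ)).re ^ 2 * (riemannZeta (k₂ : ℂ)).re ^ 2)
  have hinner : 1 / 8 * 1 * ((2 : ℝ) ^ 2) ^ 2 ≤ B * X ^ (k₁ - k₂) * (Gamma k₁ / Gamma k₂) ^ 2 := by
    gcongr ?_ * ?_ * ?_ ^ 2
    exact one_le_pow₀ hX
  have houter :
      1 / 8 * 1 * ((4 : ℝ) ^ 2) ^ 2 ≤ A * X ^ k₂ * (Gamma (k₁ + k₂ : ℕ) / Gamma k₁) ^ 2 := by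
    gcongr ?_ * ?_ * ?_ ^ 2
    exact one_le_pow₀ hX
  nlinarith
end

section
/- Define G(k) = (2π⁵/3)·(2π)^{2k−1}·Γ(k)^{−2}·(28 + 9^{k+1} + 4^{k−1}). Then for every even integer k ≥ 30, the inequality 4^k − 1 ≤ G(k) fails, i.e., 4^k − 1 > (2π⁵/3)·(2π)^{2k−1}·Γ(k)^{−2}·(28 + 9^{k+1} + 4^{k−1}). -/
open Real Nat

/-!
With `k = m + 1` we have `Γ(k) = m!`, and for `π < 3.1416` the right-hand side is at most
`141100 · 356^m / (m!)²`, since `(2π)² · 9 < 356`. As `356 = 4 · 89`, it remains to see that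
`(m!)²` beats `141100 · 89^m`; this holds at `m = 29` and persists because `(m+1)² > 89`.
-/

theorem mul_eighty_nine_pow_le_factorial_sq {m : ℕ} (hm : 29 ≤ m) : 141100 * 89 ^ m ≤ m ! ^ 2 := by
  induction m, hm using Nat.le_induction with
  | base => norm_num [Nat.factorial]
  | succ n hn ih =>
    calc 141100 * 89 ^ (n + 1) = 89 * (141100 * 89 ^ n) := by ring
      _ ≤ (n + 1) ^ 2 * n ! ^ 2 := Nat.mul_le_mul (by nlinarith) ih
      _ = (n + 1)! ^ 2 := by rw [Nat.factorial_succ]; ring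

theorem add_nine_pow_add_four_pow_le (m : ℕ) :
    (28 : ℝ) + 9 ^ (m + 2) + 4 ^ m ≤ 110 * 9 ^ m := by
  have h1 : (1 : ℝ) ≤ 9 ^ m := one_le_pow₀ (by norm_num)
  have h49 : (4 : ℝ) ^ m ≤ 9 ^ m := pow_le_pow_left₀ (by norm_num) (by norm_num) m
  rw [pow_add]
  linarith

theorem two_pi_pow_mul_le (m : ℕ) :
    2 * π ^ 5 / 3 * (2 * π) ^ (2 * m + 1) * (28 + 9 ^ (m + 2) + 4 ^ m) ≤
      141100 * 356 ^ m := by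
  have hπ : π ≤ 3.1416 := pi_lt_d6.le.trans (by norm_num)
  have hconst : 4 * π ^ 6 / 3 * 110 ≤ 141100 :=
    calc 4 * π ^ 6 / 3 * 110 ≤ 4 * 3.1416 ^ 6 / 3 * 110 := by gcongr
      _ ≤ 141100 := by norm_num
  have hbase : (2 * π) ^ 2 * 9 ≤ 356 :=
    calc (2 * π) ^ 2 * 9 ≤ (2 * 3.1416) ^ 2 * 9 := by gcongr
      _ ≤ 356 := by norm_num
  calc 2 * π ^ 5 / 3 * (2 * π) ^ (2 * m + 1) * (28 + 9 ^ (m + 2) + 4 ^ m)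
      = 4 * π ^ 6 / 3 * ((2 * π) ^ 2) ^ m * (28 + 9 ^ (m + 2) + 4 ^ m) := by
        rw [pow_succ (2 * π), pow_mul]; ring
    _ ≤ 4 * π ^ 6 / 3 * ((2 * π) ^ 2) ^ m * (110 * 9 ^ m) := by
      gcongr; exact add_nine_pow_add_four_pow_le m
    _ = 4 * π ^ 6 / 3 * 110 * ((2 * π) ^ 2 * 9) ^ m := by rw [mul_pow ((2 * π) ^ 2) 9 m]; ring
    _ ≤ 141100 * 356 ^ m := by gcongr

theorem stmt_11_general (k : ℕ) (hk : 30 ≤ k) :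
    (4 : ℝ) ^ k - 1 >
      (2 * π ^ 5 / 3) * (2 * π) ^ (2 * k - 1) * Real.Gamma k ^ (-2 : ℤ) *
        (28 + 9 ^ (k + 1) + 4 ^ (k - 1)) := by
  obtain ⟨m, rfl⟩ : ∃ m, k = m + 1 := ⟨k - 1, by omega⟩
  rw [show 2 * (m + 1) - 1 = 2 * m + 1 by omega, Nat.add_sub_cancel, Nat.cast_succ,
    Gamma_nat_eq_factorial, zpow_neg, zpow_two, ← sq, mul_right_comm, ← div_eq_mul_inv,
    gt_iff_lt, div_lt_iff₀ (by positivity)]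
  have hfact : (141100 : ℝ) * 89 ^ m ≤ (m ! : ℝ) ^ 2 := by
    exact_mod_cast mul_eighty_nine_pow_le_factorial_sq (by omega : 29 ≤ m)
  have h4 : (1 : ℝ) ≤ 4 ^ m := one_le_pow₀ (by norm_num)
  calc 2 * π ^ 5 / 3 * (2 * π) ^ (2 * m + 1) * (28 + 9 ^ (m + 2) + 4 ^ m)
      ≤ 141100 * 356 ^ m := two_pi_pow_mul_le m
    _ = 141100 * 89 ^ m * 4 ^ m := by rw [show (356 : ℝ) = 89 * 4 by norm_num, mul_pow]; ring
    _ ≤ (m ! : ℝ) ^ 2 * 4 ^ m := by gcongr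
    _ < (4 ^ (m + 1) - 1) * (m ! : ℝ) ^ 2 := by
        have : (0 : ℝ) < (m ! : ℝ) ^ 2 := by positivity
        rw [pow_succ (4 : ℝ) m]; nlinarith

theorem stmt_11 (k : ℕ) (hk : 30 ≤ k) (hke : Even k) :
    (4 : ℝ) ^ k - 1 >
      (2 * π ^ 5 / 3) * (2 * π) ^ (2 * k - 1) * Real.Gamma k ^ (-2 : ℤ) *
        (28 + 9 ^ (k + 1) + 4 ^ (k - 1)) :=
  stmt_11_general k hk
end

section
/- The real function φ(D) = 3·D^{3/2}/π⁴ + 1 − ((3D)^{1/2}/(6π))·(log(3D)/2 + 5/2 − log 6) is strictly increasing for D ≥ 12 and satisfies φ(D) > 1 for all D > 12. -/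
open Real

/-! On `(0, ∞)`, `φ'(x) = (54x - √3 π³ (log (x/12) / 2 + 7/2)) / (12 π⁴ √x)`. For `x ≥ 12`,
`log (x/12) ≤ x/12 - 1` and `√3 π³ < 64` bound the subtracted term by `8x/3 + 192 < 54x`, so `φ` is
strictly increasing on `[12, ∞)`. Since `φ 12 = 1 + 72√3/π⁴ - 5/(2π) > 1`, also `φ D > φ 12 > 1`
for `D > 12`. -/

noncomputable def phi (D : ℝ) : ℝ :=
  3 * D ^ ((3 : ℝ) / 2) / π ^ 4 + 1 -
    √(3 * D) / (6 * π) * (log (3 * D) / 2 + 5 / 2 - log 6)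

lemma log_three_mul_sub (x : ℝ) (hx : 0 < x) : log (3 * x) - 2 * log 6 = log (x / 12) := by
  rw [log_div hx.ne' (by norm_num), log_mul (by norm_num) hx.ne',
    show (12 : ℝ) = 6 ^ 2 / 3 by norm_num, log_div (by norm_num) (by norm_num), log_pow]
  push_cast; ring

lemma hasDerivAt_phi {x : ℝ} (hx : 0 < x) :
    HasDerivAt phi
      ((54 * x - √3 * π ^ 3 * (log (x / 12) / 2 + 7 / 2)) / (12 * π ^ 4 * √x)) x := by
  have h3x : 3 * x ≠ 0 := by positivity
  have hlin : HasDerivAt (fun D : ℝ => 3 * D) 3 x := by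
    simpa using (hasDerivAt_id x).const_mul (3 : ℝ)
  have hpow := ((hasDerivAt_rpow_const (p := 3 / 2) (Or.inl hx.ne')).const_mul 3).div_const (π ^ 4)
  have hsqrt := ((hasDerivAt_sqrt h3x).comp x hlin).div_const (6 * π)
  have hlog := ((((hasDerivAt_log h3x).comp x hlin).div_const 2).add_const (5 / 2)).sub_const (log 6)
  refine ((hpow.add_const 1).sub (hsqrt.mul hlog)).congr_deriv ?_
  simp only [Function.comp_apply]
  have hxs : √x ^ 2 = x := sq_sqrt hx.le
  rw [show (3 : ℝ) / 2 - 1 = 1 / 2 by norm_num, ← sqrt_eq_rpow, sqrt_mul (by norm_num),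
    ← log_three_mul_sub x hx]
  have h3 : √3 ^ 2 = 3 := sq_sqrt (by norm_num)
  field_simp
  rw [hxs]
  linear_combination 12 * x * π ^ 3 * (log (3 * x) - 2 * log 6 + 5) * h3

lemma pi_cube_lt_32 : π ^ 3 < 32 :=
  calc π ^ 3 < 3.15 ^ 3 := by gcongr; exact pi_lt_d2
    _ < 32 := by norm_num

lemma phi_deriv_numerator_pos {x : ℝ} (hx : 12 ≤ x) :
    0 < 54 * x - √3 * π ^ 3 * (log (x / 12) / 2 + 7 / 2) := by
  have hlog : log (x / 12) ≤ x / 12 - 1 := log_le_sub_one_of_pos (by positivity)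
  have hlog0 : 0 ≤ log (x / 12) := log_nonneg (by rw [le_div_iff₀ (by norm_num)]; linarith)
  have hsqrt3 : √3 < 2 := by
    rw [sqrt_lt' (by norm_num)]; norm_num
  have hc : √3 * π ^ 3 < 64 := by
    nlinarith [sqrt_nonneg 3, pow_pos pi_pos 3, pi_cube_lt_32]
  rw [sub_pos]
  calc √3 * π ^ 3 * (log (x / 12) / 2 + 7 / 2) ≤ 64 * (x / 24 + 3) :=
        mul_le_mul hc.le (by linarith) (by positivity) (by norm_num)
    _ < 54 * x := by linarith

lemma rpow_three_halves {x : ℝ} (hx : 0 ≤ x) : x ^ ((3 : ℝ) / 2) = x * √x := by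
  rw [show (3 : ℝ) / 2 = 1 + 1 / 2 by norm_num, rpow_add' hx (by norm_num), rpow_one,
    sqrt_eq_rpow]

lemma one_lt_phi_twelve : 1 < phi 12 := by
  have hlog : log (3 * 12) / 2 + 5 / 2 - log 6 = 5 / 2 := by
    linarith [log_three_mul_sub 12 (by norm_num), show log ((12 : ℝ) / 12) = 0 by simp]
  have h36 : √(3 * 12 : ℝ) = 6 := by
    rw [show (3 * 12 : ℝ) = 6 ^ 2 by norm_num, sqrt_sq (by norm_num)]
  have h12 : 3 < √(12 : ℝ) := by
    rw [lt_sqrt (by norm_num)]; norm_num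
  have hpi := pi_pos
  have hpi3 := pi_cube_lt_32
  rw [phi, rpow_three_halves (by norm_num), hlog, h36, lt_sub_iff_add_lt, add_comm,
    add_lt_add_iff_right, div_mul_div_comm, div_lt_div_iff₀ (by positivity) (by positivity)]
  nlinarith

lemma strictMonoOn_phi : StrictMonoOn phi (Set.Ici 12) := by
  have hderiv : ∀ x ∈ Set.Ici (12 : ℝ), HasDerivAt phi _ x := fun x hx =>
    hasDerivAt_phi (lt_of_lt_of_le (by norm_num) hx)
  refine strictMonoOn_of_deriv_pos (convex_Ici 12)
    (fun x hx => (hderiv x hx).continuousAt.continuousWithinAt) fun x hx => ?_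
  rw [interior_Ici, Set.mem_Ioi] at hx
  rw [(hderiv x (Set.mem_Ici.mpr hx.le)).deriv]
  have hsqrt : 0 < √x := sqrt_pos.mpr (by linarith)
  exact div_pos (phi_deriv_numerator_pos hx.le) (by positivity)

theorem stmt_14 :
    StrictMonoOn
      (fun D : ℝ => 3 * D ^ ((3 : ℝ) / 2) / π ^ 4 + 1 -
        Real.sqrt (3 * D) / (6 * π) * (Real.log (3 * D) / 2 + 5 / 2 - Real.log 6))
      (Set.Ici (12 : ℝ)) ∧
    ∀ D : ℝ, 12 < D →
      3 * D ^ ((3 : ℝ) / 2) / π ^ 4 + 1 -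
        Real.sqrt (3 * D) / (6 * π) * (Real.log (3 * D) / 2 + 5 / 2 - Real.log 6) > 1 :=
  ⟨strictMonoOn_phi, fun _ hD =>
    one_lt_phi_twelve.trans (strictMonoOn_phi Set.self_mem_Ici hD.le hD)⟩
end
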